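/- Let f = (f11, f12, f22) ∈ C²_c(S²; D1). Then Mf(x) = 0 for all x ∈ ℝ² if and only if there exists a continuously differentiable function φ : ℝ² → ℝ with gradient ∇φ = ((u1² − u2²) f12, −u1² (f11 − f22)) on ℝ². (Kernel description of the mixed V-line transform.) -/

import Mathlib

noncomputable section

open MeasureTheory

/-- The divergent beam transform `X_w h (x) = ∫₀^∞ h(x + t w) dt`. -/
def Xbeam (w : ℝ × ℝ) (h : ℝ × ℝ → ℝ) (x : ℝ × ℝ) : ℝ :=
  ∫ t in Set.Ioi (0 : ℝ), h (x + t • w)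

/-- The k-th moment divergent beam transform `X_w^k h (x) = ∫₀^∞ t^k h(x + t w) dt`. -/
def Xmom (k : ℕ) (w : ℝ × ℝ) (h : ℝ × ℝ → ℝ) (x : ℝ × ℝ) : ℝ :=
  ∫ t in Set.Ioi (0 : ℝ), t ^ k * h (x + t • w)

/-- The directional derivative `D_w h = w ⋅ ∇h`. -/
def Dir (w : ℝ × ℝ) (h : ℝ × ℝ → ℝ) (x : ℝ × ℝ) : ℝ :=
  fderiv ℝ h x w

/-- Support contained in the open unit disc `D1`. -/
def SuppInDisc (h : ℝ × ℝ → ℝ) : Prop :=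
  ∀ x : ℝ × ℝ, 1 ≤ x.1 ^ 2 + x.2 ^ 2 → h x = 0

/-- The longitudinal V-line transform. -/
def VlineL (u1 u2 : ℝ) (f11 f12 f22 : ℝ × ℝ → ℝ) : ℝ × ℝ → ℝ :=
  Xbeam (u1, u2) (fun y => u1 ^ 2 * f11 y + 2 * u1 * u2 * f12 y + u2 ^ 2 * f22 y)
    + Xbeam (-u1, u2) (fun y => u1 ^ 2 * f11 y - 2 * u1 * u2 * f12 y + u2 ^ 2 * f22 y)

/-- The transverse V-line transform. -/
def VlineT (u1 u2 : ℝ) (f11 f12 f22 : ℝ × ℝ → ℝ) : ℝ × ℝ → ℝ :=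
  Xbeam (u1, u2) (fun y => u2 ^ 2 * f11 y - 2 * u1 * u2 * f12 y + u1 ^ 2 * f22 y)
    + Xbeam (-u1, u2) (fun y => u2 ^ 2 * f11 y + 2 * u1 * u2 * f12 y + u1 ^ 2 * f22 y)

/-- The mixed V-line transform. -/
def VlineM (u1 u2 : ℝ) (f11 f12 f22 : ℝ × ℝ → ℝ) : ℝ × ℝ → ℝ :=
  Xbeam (u1, u2) (fun y => -(u1 * u2) * f11 y + (u1 ^ 2 - u2 ^ 2) * f12 y + u1 * u2 * f22 y)
    + Xbeam (-u1, u2) (fun y => u1 * u2 * f11 y + (u1 ^ 2 - u2 ^ 2) * f12 y - u1 * u2 * f22 y)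

/-- The k-th moment longitudinal V-line transform. -/
def VlineLk (k : ℕ) (u1 u2 : ℝ) (f11 f12 f22 : ℝ × ℝ → ℝ) : ℝ × ℝ → ℝ :=
  Xmom k (u1, u2) (fun y => u1 ^ 2 * f11 y + 2 * u1 * u2 * f12 y + u2 ^ 2 * f22 y)
    + Xmom k (-u1, u2) (fun y => u1 ^ 2 * f11 y - 2 * u1 * u2 * f12 y + u2 ^ 2 * f22 y)

/-- The k-th moment transverse V-line transform. -/
def VlineTk (k : ℕ) (u1 u2 : ℝ) (f11 f12 f22 : ℝ × ℝ → ℝ) : ℝ × ℝ → ℝ :=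
  Xmom k (u1, u2) (fun y => u2 ^ 2 * f11 y - 2 * u1 * u2 * f12 y + u1 ^ 2 * f22 y)
    + Xmom k (-u1, u2) (fun y => u2 ^ 2 * f11 y + 2 * u1 * u2 * f12 y + u1 ^ 2 * f22 y)

/-- The k-th moment mixed V-line transform. -/
def VlineMk (k : ℕ) (u1 u2 : ℝ) (f11 f12 f22 : ℝ × ℝ → ℝ) : ℝ × ℝ → ℝ :=
  Xmom k (u1, u2) (fun y => -(u1 * u2) * f11 y + (u1 ^ 2 - u2 ^ 2) * f12 y + u1 * u2 * f22 y)
    + Xmom k (-u1, u2) (fun y => u1 * u2 * f11 y + (u1 ^ 2 - u2 ^ 2) * f12 y - u1 * u2 * f22 y)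

/-!
Write `Mf = X_u g_u + X_v g_v`. If `φ` is `C¹` with gradient `(F₁, F₂)` as in the statement, then
`D_u φ = u1 g_u` and `D_v φ = -u1 g_v`; since `∇φ` vanishes above the disc, `φ` equals a constant `c`
there, and the fundamental theorem of calculus along each ray gives `X_w (D_w φ) = c - φ` for `w = u, v`, so
`Mf = (X_u (D_u φ) - X_v (D_v φ)) / u1 = 0`.

Conversely, beam transforms of compactly supported `C¹` functions are `C¹` (differentiate under the
integral over a bounded piece of the ray) and satisfy `D_w X_w g = -g`. If `Mf = 0`, the function
`φ = u1 X_v g_v = -u1 X_u g_u` therefore has `D_u φ = u1 g_u` and `D_v φ = -u1 g_v`, and since `u`, `v`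
span `ℝ²` these two directional derivatives are exactly the required gradient.
-/

open Filter Topology Metric

section RayIntegral

variable {E F : Type*} [NormedAddCommGroup E] [NormedSpace ℝ E] [NormedAddCommGroup F]

theorem HasCompactSupport.exists_forall_add_smul_eq_zero {g : E → F}
    (hg : HasCompactSupport g) {w : E} (hw : w ≠ 0) (x₀ : E) :
    ∃ C : ℝ, 0 ≤ C ∧ ∀ x ∈ ball x₀ 1, ∀ t : ℝ, C ≤ t → g (x + t • w) = 0 := by
  obtain ⟨R, hR⟩ := (isBounded_iff_subset_closedBall 0).mp hg.isCompact.isBounded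
  have hw' : 0 < ‖w‖ := norm_pos_iff.mpr hw
  refine ⟨(|R| + ‖x₀‖ + 1) / ‖w‖, by positivity, fun x hx t ht => ?_⟩
  refine image_eq_zero_of_notMem_tsupport fun hmem => ?_
  have hfar : |R| + ‖x₀‖ + 1 ≤ t * ‖w‖ := (div_le_iff₀ hw').mp ht
  have hx' : ‖x‖ < ‖x₀‖ + 1 := by
    linarith [norm_le_norm_add_norm_sub' x x₀, mem_ball_iff_norm.mp hx]
  have hnear : ‖x + t • w‖ ≤ R := mem_closedBall_zero_iff.mp (hR hmem)
  have hts : ‖t • w‖ = t * ‖w‖ := by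
    rw [norm_smul, Real.norm_of_nonneg ((div_nonneg (by positivity) hw'.le).trans ht)]
  have htri : ‖t • w‖ ≤ ‖x + t • w‖ + ‖x‖ := by
    simpa using norm_add_le (x + t • w) (-x)
  linarith [le_abs_self R]

variable [NormedSpace ℝ F]

theorem intervalIntegral_fderiv_apply_add_smul [CompleteSpace F] {g : E → F}
    (hg : ContDiff ℝ 1 g) (x w : E) (a b : ℝ) :
    ∫ t in a..b, fderiv ℝ g (x + t • w) w = g (x + b • w) - g (x + a • w) := by
  have hline (t : ℝ) : HasDerivAt (fun t : ℝ => x + t • w) w t := by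
    simpa using ((hasDerivAt_id t).smul_const w).const_add x
  exact intervalIntegral.integral_eq_sub_of_hasDerivAt
    (fun t _ => ((hg.differentiable one_ne_zero) _).hasFDerivAt.comp_hasDerivAt t (hline t))
    ((by fun_prop : Continuous fun t : ℝ => fderiv ℝ g (x + t • w) w).intervalIntegrable _ _)

theorem hasFDerivAt_intervalIntegral_comp_add_smul {g : E → F} (hg : ContDiff ℝ 1 g)
    (hcs : HasCompactSupport g) (w : E) (a b : ℝ) (x₀ : E) :
    HasFDerivAt (fun x => ∫ t in a..b, g (x + t • w))
      (∫ t in a..b, fderiv ℝ g (x₀ + t • w)) x₀ := by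
  have hg' : Continuous (fderiv ℝ g) := hg.continuous_fderiv one_ne_zero
  obtain ⟨M, hM⟩ := hg'.bounded_above_of_compact_support (hcs.fderiv (𝕜 := ℝ))
  have hline (x : E) : Continuous fun t : ℝ => x + t • w := by fun_prop
  exact intervalIntegral.hasFDerivAt_integral_of_dominated_of_fderiv_le
    (F' := fun x t => fderiv ℝ g (x + t • w)) (bound := fun _ => M)
    univ_mem (Eventually.of_forall fun x => (hg.continuous.comp (hline x)).aestronglyMeasurable)
    ((hg.continuous.comp (hline x₀)).intervalIntegrable _ _)
    (hg'.comp (hline x₀)).aestronglyMeasurable (ae_of_all _ fun t _ x _ => hM _)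
    intervalIntegrable_const
    (ae_of_all _ fun t _ x _ =>
      (hasFDerivAt_comp_add_right (t • w)).mpr ((hg.differentiable one_ne_zero) _).hasFDerivAt)

theorem contDiff_intervalIntegral_comp_add_smul {g : E → F} (hg : ContDiff ℝ 1 g)
    (hcs : HasCompactSupport g) (w : E) (a b : ℝ) :
    ContDiff ℝ 1 (fun x => ∫ t in a..b, g (x + t • w)) := by
  have hderiv := hasFDerivAt_intervalIntegral_comp_add_smul hg hcs w a b
  rw [contDiff_one_iff_fderiv, funext fun x => (hderiv x).fderiv]
  have hg' : Continuous (fderiv ℝ g) := hg.continuous_fderiv one_ne_zero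
  exact ⟨fun x => (hderiv x).differentiableAt,
    intervalIntegral.continuous_parametric_intervalIntegral_of_continuous' (by fun_prop) a b⟩

end RayIntegral

theorem ContinuousLinearMap.apply_mk_eq_add (L : ℝ × ℝ →L[ℝ] ℝ) (a b : ℝ) :
    L (a, b) = a * L (1, 0) + b * L (0, 1) := by
  have hab : ((a, b) : ℝ × ℝ) = a • (1, 0) + b • (0, 1) := by simp
  rw [hab, map_add, map_smul, map_smul, smul_eq_mul, smul_eq_mul]

section Xbeam

variable {w : ℝ × ℝ} {g : ℝ × ℝ → ℝ}

theorem Xbeam_eq_intervalIntegral {x : ℝ × ℝ} {C : ℝ} (hC : 0 ≤ C)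
    (hvanish : ∀ t : ℝ, C ≤ t → g (x + t • w) = 0) :
    Xbeam w g x = ∫ t in 0..C, g (x + t • w) := by
  rw [Xbeam, intervalIntegral.integral_of_le hC]
  refine setIntegral_eq_of_subset_of_forall_sdiff_eq_zero measurableSet_Ioi
    Set.Ioc_subset_Ioi_self fun t ht => hvanish t ?_
  simp only [Set.mem_sdiff, Set.mem_Ioi, Set.mem_Ioc, not_and, not_le] at ht
  exact (ht.2 ht.1).le

theorem Xbeam_const_mul (c : ℝ) (x : ℝ × ℝ) :
    Xbeam w (fun y => c * g y) x = c * Xbeam w g x :=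
  integral_const_mul c _

theorem contDiff_Xbeam (hg : ContDiff ℝ 1 g) (hcs : HasCompactSupport g) (hw : w ≠ 0) :
    ContDiff ℝ 1 (Xbeam w g) := by
  refine contDiff_iff_contDiffAt.mpr fun x₀ => ?_
  obtain ⟨C, hC, hvanish⟩ := hcs.exists_forall_add_smul_eq_zero hw x₀
  refine (contDiff_intervalIntegral_comp_add_smul hg hcs w 0 C).contDiffAt.congr_of_eventuallyEq ?_
  filter_upwards [ball_mem_nhds x₀ one_pos] with x hx
  exact Xbeam_eq_intervalIntegral hC (hvanish x hx)

theorem fderiv_Xbeam_apply_self (hg : ContDiff ℝ 1 g) (hcs : HasCompactSupport g) (hw : w ≠ 0)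
    (x : ℝ × ℝ) : fderiv ℝ (Xbeam w g) x w = -g x := by
  obtain ⟨C, hC, hvanish⟩ := hcs.exists_forall_add_smul_eq_zero hw x
  have hloc : Xbeam w g =ᶠ[𝓝 x] fun y => ∫ t in 0..C, g (y + t • w) := by
    filter_upwards [ball_mem_nhds x one_pos] with y hy
    exact Xbeam_eq_intervalIntegral hC (hvanish y hy)
  have hint : IntervalIntegrable (fun t : ℝ => fderiv ℝ g (x + t • w)) volume 0 C :=
    ((hg.continuous_fderiv one_ne_zero).comp (by fun_prop)).intervalIntegrable _ _
  rw [hloc.fderiv_eq, (hasFDerivAt_intervalIntegral_comp_add_smul hg hcs w 0 C x).fderiv,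
    ContinuousLinearMap.intervalIntegral_apply hint, intervalIntegral_fderiv_apply_add_smul hg,
    hvanish x (mem_ball_self one_pos) C le_rfl, zero_smul, add_zero, zero_sub]

theorem exists_Xbeam_fderiv_apply_self_eq_sub {φ : ℝ × ℝ → ℝ} (hφ : ContDiff ℝ 1 φ) {R : ℝ}
    (hflat : ∀ y : ℝ × ℝ, R < y.2 → fderiv ℝ φ y = 0) (hw : 0 < w.2) (x : ℝ × ℝ) :
    ∃ y : ℝ × ℝ, R < y.2 ∧ Xbeam w (fun y => fderiv ℝ φ y w) x = φ y - φ x := by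
  set C := |R - x.2| / w.2 + 1
  have hC : 0 ≤ C := by positivity
  have habove : ∀ t : ℝ, C ≤ t → R < (x + t • w).2 := by
    intro t ht
    have hCw : C * w.2 = |R - x.2| + w.2 := by simp only [C]; field_simp
    have : C * w.2 ≤ t * w.2 := mul_le_mul_of_nonneg_right ht hw.le
    simp only [Prod.snd_add, Prod.smul_snd, smul_eq_mul]
    linarith [le_abs_self (R - x.2)]
  refine ⟨x + C • w, habove C le_rfl, ?_⟩
  rw [Xbeam_eq_intervalIntegral hC fun t ht => by simp [hflat _ (habove t ht)],
    intervalIntegral_fderiv_apply_add_smul hφ, zero_smul, add_zero]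

end Xbeam

theorem exists_fderiv_eq_of_Xbeam_add_Xbeam_eq_zero {u v : ℝ × ℝ} (hu : u ≠ 0) (hv : v ≠ 0)
    {g h : ℝ × ℝ → ℝ} (hg : ContDiff ℝ 1 g) (hh : ContDiff ℝ 1 h)
    (hgc : HasCompactSupport g) (hhc : HasCompactSupport h)
    (hzero : ∀ x, Xbeam u g x + Xbeam v h x = 0) :
    ∃ φ : ℝ × ℝ → ℝ, ContDiff ℝ 1 φ ∧ ∀ x, fderiv ℝ φ x u = g x ∧ fderiv ℝ φ x v = -h x := by
  have hXu : Xbeam v h = fun x => -Xbeam u g x := funext fun x => by linarith [hzero x]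
  refine ⟨Xbeam v h, contDiff_Xbeam hh hhc hv, fun x => ⟨?_, fderiv_Xbeam_apply_self hh hhc hv x⟩⟩
  rw [hXu, fderiv_fun_neg, neg_apply, fderiv_Xbeam_apply_self hg hgc hu, neg_neg]

theorem Xbeam_fderiv_apply_eq {φ : ℝ × ℝ → ℝ} (hφ : ContDiff ℝ 1 φ) {R : ℝ}
    (hflat : ∀ y : ℝ × ℝ, R < y.2 → fderiv ℝ φ y = 0) {u v : ℝ × ℝ} (hu : 0 < u.2)
    (hv : 0 < v.2) (x : ℝ × ℝ) :
    Xbeam u (fun y => fderiv ℝ φ y u) x = Xbeam v (fun y => fderiv ℝ φ y v) x := by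
  obtain ⟨y, hy, hXu⟩ := exists_Xbeam_fderiv_apply_self_eq_sub hφ hflat hu x
  obtain ⟨z, hz, hXv⟩ := exists_Xbeam_fderiv_apply_self_eq_sub hφ hflat hv x
  have hconst : φ y = φ z :=
    (isOpen_lt continuous_const continuous_snd).is_const_of_fderiv_eq_zero
      (convex_halfSpace_gt (LinearMap.snd ℝ ℝ ℝ).isLinear R).isPreconnected
      (hφ.differentiable one_ne_zero).differentiableOn hflat hy hz
  rw [hXu, hXv, hconst]

theorem SuppInDisc.hasCompactSupport {h : ℝ × ℝ → ℝ} (hs : SuppInDisc h) :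
    HasCompactSupport h := by
  refine HasCompactSupport.intro (isCompact_closedBall (0 : ℝ × ℝ) 1) fun x hx => hs x ?_
  rw [mem_closedBall_zero_iff, Prod.norm_def, Real.norm_eq_abs, Real.norm_eq_abs, not_le,
    lt_sup_iff] at hx
  rcases hx with hx | hx <;> nlinarith [sq_abs x.1, sq_abs x.2, abs_nonneg x.1, abs_nonneg x.2]

section VlineM

variable {u1 u2 : ℝ} {f11 f12 f22 : ℝ × ℝ → ℝ}

theorem exists_potential_of_VlineM_eq_zero (hu1 : u1 ≠ 0) (hu2 : u2 ≠ 0)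
    (h11 : ContDiff ℝ 1 f11) (h12 : ContDiff ℝ 1 f12) (h22 : ContDiff ℝ 1 f22)
    (c11 : HasCompactSupport f11) (c12 : HasCompactSupport f12) (c22 : HasCompactSupport f22)
    (hM : ∀ x, VlineM u1 u2 f11 f12 f22 x = 0) :
    ∃ φ : ℝ × ℝ → ℝ, ContDiff ℝ 1 φ ∧ ∀ x : ℝ × ℝ,
      fderiv ℝ φ x (1, 0) = (u1 ^ 2 - u2 ^ 2) * f12 x ∧
      fderiv ℝ φ x (0, 1) = -(u1 ^ 2) * (f11 x - f22 x) := by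
  obtain ⟨ψ, hψ, hdir⟩ := exists_fderiv_eq_of_Xbeam_add_Xbeam_eq_zero (u := (u1, u2))
    (v := (-u1, u2)) (by simp [hu1]) (by simp [hu1]) (by fun_prop) (by fun_prop)
    (by exact (c11.mul_left.add c12.mul_left).add c22.mul_left)
    (by exact (c11.mul_left.add c12.mul_left).sub c22.mul_left) hM
  refine ⟨fun x => u1 * ψ x, contDiff_const.mul hψ, fun x => ?_⟩
  have hu := (hdir x).1
  have hv := (hdir x).2
  rw [ContinuousLinearMap.apply_mk_eq_add] at hu hv
  rw [fderiv_const_mul ((hψ.differentiable one_ne_zero) x)]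
  simp only [smul_apply, smul_eq_mul]
  constructor
  · linear_combination (hu - hv) / 2
  · refine mul_left_cancel₀ hu2 ?_
    linear_combination u1 * (hu + hv) / 2

theorem VlineM_eq_zero_of_fderiv_eq (hu1 : u1 ≠ 0) (hu2 : 0 < u2)
    (s11 : SuppInDisc f11) (s12 : SuppInDisc f12) (s22 : SuppInDisc f22)
    {φ : ℝ × ℝ → ℝ} (hφ : ContDiff ℝ 1 φ)
    (hgrad : ∀ x : ℝ × ℝ, fderiv ℝ φ x (1, 0) = (u1 ^ 2 - u2 ^ 2) * f12 x ∧
      fderiv ℝ φ x (0, 1) = -(u1 ^ 2) * (f11 x - f22 x))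
    (x : ℝ × ℝ) : VlineM u1 u2 f11 f12 f22 x = 0 := by
  have hdir (y : ℝ × ℝ) (a b : ℝ) : fderiv ℝ φ y (a, b) =
      a * ((u1 ^ 2 - u2 ^ 2) * f12 y) + b * (-(u1 ^ 2) * (f11 y - f22 y)) := by
    rw [ContinuousLinearMap.apply_mk_eq_add, (hgrad y).1, (hgrad y).2]
  have hflat (y : ℝ × ℝ) (hy : 1 < y.2) : fderiv ℝ φ y = 0 := by
    have hout : 1 ≤ y.1 ^ 2 + y.2 ^ 2 := by nlinarith [sq_nonneg y.1]
    refine ContinuousLinearMap.ext fun p => ?_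
    rw [← Prod.mk.eta (p := p), hdir, s11 y hout, s12 y hout, s22 y hout]
    simp
  have hgu : (fun y => -(u1 * u2) * f11 y + (u1 ^ 2 - u2 ^ 2) * f12 y + u1 * u2 * f22 y) =
      fun y => u1⁻¹ * fderiv ℝ φ y (u1, u2) := by
    ext y
    rw [hdir]
    field_simp
    ring
  have hgv : (fun y => u1 * u2 * f11 y + (u1 ^ 2 - u2 ^ 2) * f12 y - u1 * u2 * f22 y) =
      fun y => -u1⁻¹ * fderiv ℝ φ y (-u1, u2) := by
    ext y
    rw [hdir]
    field_simp
    ring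
  rw [VlineM, Pi.add_apply, hgu, hgv, Xbeam_const_mul, Xbeam_const_mul,
    Xbeam_fderiv_apply_eq hφ hflat (u := (u1, u2)) (v := (-u1, u2)) hu2 hu2 x]
  ring

end VlineM

theorem kernel_mixed_general
    (u1 u2 : ℝ) (hu1 : 0 < u1) (hu2 : 0 < u2)
    (f11 f12 f22 : ℝ × ℝ → ℝ)
    (h11 : ContDiff ℝ 2 f11) (h12 : ContDiff ℝ 2 f12) (h22 : ContDiff ℝ 2 f22)
    (s11 : SuppInDisc f11) (s12 : SuppInDisc f12) (s22 : SuppInDisc f22) :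
    (∀ x : ℝ × ℝ, VlineM u1 u2 f11 f12 f22 x = 0) ↔
      ∃ φ : ℝ × ℝ → ℝ, ContDiff ℝ 1 φ ∧
        ∀ x : ℝ × ℝ,
          fderiv ℝ φ x ((1 : ℝ), (0 : ℝ)) = (u1 ^ 2 - u2 ^ 2) * f12 x ∧
          fderiv ℝ φ x ((0 : ℝ), (1 : ℝ)) = -(u1 ^ 2) * (f11 x - f22 x) := by
  constructor
  · exact exists_potential_of_VlineM_eq_zero hu1.ne' hu2.ne' (h11.of_le one_le_two)
      (h12.of_le one_le_two) (h22.of_le one_le_two) s11.hasCompactSupport s12.hasCompactSupport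
      s22.hasCompactSupport
  · rintro ⟨φ, hφ, hgrad⟩
    exact VlineM_eq_zero_of_fderiv_eq hu1.ne' hu2 s11 s12 s22 hφ hgrad

/-- kernel description of the mixed V-line transform. -/
theorem kernel_mixed
    (u1 u2 : ℝ) (hu : u1 ^ 2 + u2 ^ 2 = 1) (hu1 : 0 < u1) (hu2 : 0 < u2)
    (f11 f12 f22 : ℝ × ℝ → ℝ)
    (h11 : ContDiff ℝ 2 f11) (h12 : ContDiff ℝ 2 f12) (h22 : ContDiff ℝ 2 f22)
    (s11 : SuppInDisc f11) (s12 : SuppInDisc f12) (s22 : SuppInDisc f22) :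
    (∀ x : ℝ × ℝ, VlineM u1 u2 f11 f12 f22 x = 0) ↔
      ∃ φ : ℝ × ℝ → ℝ, ContDiff ℝ 1 φ ∧
        ∀ x : ℝ × ℝ,
          fderiv ℝ φ x ((1 : ℝ), (0 : ℝ)) = (u1 ^ 2 - u2 ^ 2) * f12 x ∧
          fderiv ℝ φ x ((0 : ℝ), (1 : ℝ)) = -(u1 ^ 2) * (f11 x - f22 x) :=
  kernel_mixed_general u1 u2 hu1 hu2 f11 f12 f22 h11 h12 h22 s11 s12 s22
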